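/- Let G be a finite weighted tree whose set of leaves is {v_1, …, v_k} and which has at least one interior vertex. Write the weighted Laplacian in block form L(G) = [[D̂, −Bᵀ],[−B, L̂]] with respect to the partition of the vertices into the leaves v_1, …, v_k and the interior vertices, and let S := D̂ − Bᵀ L̂⁻¹ B be the Schur complement of L(G) onto the leaves (L̂ is invertible since G is connected). Fix i₀ ∈ {1,…,k} and let S_{i₀} be the k×k matrix obtained from S by replacing the (i₀,i₀) entry by 1 and all other entries of the i₀-th row and of the i₀-th column by 0. Then S_{i₀} is invertible and, for every j ≠ i₀, the j-th diagonal entry of S_{i₀}⁻¹ equals d_G(v_j, v_{i₀}), the distance between the leaves v_j and v_{i₀}. -/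

import Mathlib

/-!
Write `r = v i₀` and `L` for the weighted Laplacian. In a tree every neighbour of `x`, except the
next vertex on the path from `x` to `r`, is `1 / w` farther from `r`; hence `L (d · r)` equals
`2 - deg` away from `r` and `-deg` at `r`, and the Gromov product
`(x | t)_r = (d x r + d t r - d x t) / 2` satisfies `L (· | t)_r = δ_t - δ_r`. For a leaf `t` this
vanishes at every interior vertex, and on vectors harmonic at the interior the Schur complement
acts on the leaf values as `L` does, so `S (v · | t)_r = δ_t - δ_r`. As `(r | t)_r = 0`, these
columns together with `δ_r` form the inverse of `S_{i₀}`, whose diagonal entries are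
`(t | t)_r = d t r`. The interior block `L̂` is invertible by the energy identity
`⟨f, L f⟩ = ½ ∑ w_ab (f a - f b)²`: a kernel vector, extended by zero, is constant on the
connected tree and vanishes at a leaf.
-/

open Finset Matrix

def weightedLaplacian {V : Type*} [Fintype V] [DecidableEq V]
    (G : SimpleGraph V) [DecidableRel G.Adj] (w : V → V → ℝ) : Matrix V V ℝ :=
  Matrix.of fun i j =>
    if i = j then ∑ k ∈ Finset.univ.filter (G.Adj i ·), w i k
    else if G.Adj i j then - w i j else 0

namespace SimpleGraph

variable {V : Type*} {G : SimpleGraph V}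

lemma Preconnected.eq_of_forall_adj {α : Type*} (hG : G.Preconnected) {f : V → α}
    (hf : ∀ a b, G.Adj a b → f a = f b) (a b : V) : f a = f b := by
  obtain ⟨p⟩ := hG a b
  induction p with
  | nil => rfl
  | cons h _ ih => exact (hf _ _ h).trans ih

noncomputable def Walk.weightedLength (w : V → V → ℝ) {a b : V} (p : G.Walk a b) : ℝ :=
  (p.darts.map fun dd => 1 / w dd.toProd.1 dd.toProd.2).sum

@[simp]
lemma Walk.weightedLength_nil (w : V → V → ℝ) (a : V) :
    (nil : G.Walk a a).weightedLength w = 0 := rfl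

@[simp]
lemma Walk.weightedLength_cons (w : V → V → ℝ) {a b c : V} (h : G.Adj a b) (p : G.Walk b c) :
    (cons h p).weightedLength w = 1 / w a b + p.weightedLength w := by
  simp [weightedLength]

lemma Walk.weightedLength_reverse {w : V → V → ℝ} (hw : ∀ a b, w a b = w b a) {a b : V}
    (p : G.Walk a b) : p.reverse.weightedLength w = p.weightedLength w := by
  simp only [weightedLength, darts_reverse, List.map_reverse, List.sum_reverse, List.map_map,
    Function.comp_def, Dart.symm_toProd, Prod.fst_swap, Prod.snd_swap, hw]

def IsPathDist (G : SimpleGraph V) (w d : V → V → ℝ) : Prop :=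
  ∀ (a b : V) (p : G.Walk a b), p.IsPath → d a b = p.weightedLength w

namespace IsPathDist

variable {w d : V → V → ℝ}

lemma self_eq_zero (hd : G.IsPathDist w d) (a : V) : d a a = 0 :=
  hd a a .nil .nil

lemma symm (hd : G.IsPathDist w d) (hconn : G.Connected) (hw : ∀ a b, w a b = w b a)
    (a b : V) : d a b = d b a := by
  classical
  obtain ⟨p⟩ := hconn a b
  rw [hd a b _ p.bypass_isPath, hd b a _ p.bypass_isPath.reverse, Walk.weightedLength_reverse hw]

lemma adj_eq_add_of_ne_snd (hd : G.IsPathDist w d) (hG : G.IsAcyclic) {a c r : V}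
    {p : G.Walk a r} (hp : p.IsPath) (hac : G.Adj a c) (hc : c ≠ p.snd) :
    d c r = 1 / w c a + d a r := by
  have hcp : c ∉ p.support := fun hmem => hc (hG.eq_snd_of_adj_start hp hac hmem)
  rw [hd c r _ (hp.cons hcp (h := hac.symm)), hd a r p hp, Walk.weightedLength_cons]

lemma eq_add_of_cons (hd : G.IsPathDist w d) {a b r : V} {h : G.Adj a b} {q : G.Walk b r}
    (hp : (Walk.cons h q).IsPath) : d a r = 1 / w a b + d b r := by
  rw [hd a r _ hp, hd b r q hp.of_cons, Walk.weightedLength_cons]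

end IsPathDist

end SimpleGraph

section Laplacian

variable {V : Type*} [Fintype V] [DecidableEq V] {G : SimpleGraph V} [DecidableRel G.Adj]
  {w : V → V → ℝ}

lemma weightedLaplacian_apply (a b : V) :
    weightedLaplacian G w a b =
      (if a = b then ∑ c ∈ G.neighborFinset a, w a c else 0) - if G.Adj a b then w a b else 0 := by
  by_cases hab : a = b
  · subst hab
    simp [weightedLaplacian, SimpleGraph.neighborFinset_eq_filter]
  · simp only [weightedLaplacian, of_apply, hab, if_false, zero_sub]
    split_ifs <;> simp

lemma weightedLaplacian_mulVec_apply (f : V → ℝ) (a : V) :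
    (weightedLaplacian G w *ᵥ f) a = ∑ b ∈ G.neighborFinset a, w a b * (f a - f b) := by
  simp [mulVec, dotProduct, weightedLaplacian_apply, sub_mul, ite_mul, Finset.sum_sub_distrib,
    ← Finset.sum_filter, SimpleGraph.neighborFinset_eq_filter, mul_sub, Finset.sum_mul]

lemma weightedLaplacian_isSymm (hw : ∀ a b, w a b = w b a) : (weightedLaplacian G w).IsSymm := by
  ext a b
  by_cases hab : a = b
  · subst hab; rfl
  · simp [weightedLaplacian_apply, hab, Ne.symm hab, G.adj_comm, hw a b]

lemma dotProduct_weightedLaplacian_mulVec (hw : ∀ a b, w a b = w b a) (f : V → ℝ) :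
    f ⬝ᵥ (weightedLaplacian G w *ᵥ f) =
      (∑ a, ∑ b ∈ G.neighborFinset a, w a b * (f a - f b) ^ 2) / 2 := by
  have hswap : ∑ a, ∑ b ∈ G.neighborFinset a, f a * (w a b * (f a - f b)) =
      ∑ a, ∑ b ∈ G.neighborFinset a, f b * (w a b * (f b - f a)) := by
    simp only [SimpleGraph.neighborFinset_eq_filter, Finset.sum_filter]
    rw [Finset.sum_comm]
    simp only [G.adj_comm, hw]
  simp only [dotProduct, weightedLaplacian_mulVec_apply, Finset.mul_sum]
  rw [eq_div_iff two_ne_zero, mul_two]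
  nth_rw 2 [hswap]
  simp only [← Finset.sum_add_distrib]
  exact Finset.sum_congr rfl fun _ _ => Finset.sum_congr rfl fun _ _ => by ring

lemma eq_of_adj_of_dotProduct_weightedLaplacian_mulVec_eq_zero (hw : ∀ a b, w a b = w b a)
    (hpos : ∀ a b, G.Adj a b → 0 < w a b) {f : V → ℝ}
    (hf : f ⬝ᵥ (weightedLaplacian G w *ᵥ f) = 0) {a b : V} (hab : G.Adj a b) : f a = f b := by
  have hnonneg : ∀ a, ∀ b ∈ G.neighborFinset a, 0 ≤ w a b * (f a - f b) ^ 2 := fun a b hb =>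
    mul_nonneg (hpos a b ((G.mem_neighborFinset a b).mp hb)).le (sq_nonneg _)
  rw [dotProduct_weightedLaplacian_mulVec hw, div_eq_zero_iff, or_iff_left two_ne_zero,
    Finset.sum_eq_zero_iff_of_nonneg fun a _ => Finset.sum_nonneg (hnonneg a)] at hf
  have hterm := (Finset.sum_eq_zero_iff_of_nonneg (hnonneg a)).mp (hf a (Finset.mem_univ a)) b
    ((G.mem_neighborFinset a b).mpr hab)
  rw [mul_eq_zero, or_iff_right (hpos a b hab).ne', sq_eq_zero_iff, sub_eq_zero] at hterm
  exact hterm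

lemma isUnit_weightedLaplacian_submatrix (hconn : G.Connected) (hw : ∀ a b, w a b = w b a)
    (hpos : ∀ a b, G.Adj a b → 0 < w a b) (p : V → Prop) [DecidablePred p] (hp : ∃ a, ¬ p a) :
    IsUnit ((weightedLaplacian G w).submatrix (Subtype.val : {a // p a} → V)
      (Subtype.val : {a // p a} → V)) := by
  classical
  rw [isUnit_iff_isUnit_det, isUnit_iff_ne_zero, Ne, ← exists_mulVec_eq_zero_iff]
  rintro ⟨y, hy0, hy⟩
  apply hy0
  set f : V → ℝ := fun a => if h : p a then y ⟨a, h⟩ else 0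
  have hf_in : ∀ a : {a // p a}, f a = y a := fun a => dif_pos a.2
  have hf_out : ∀ a : {a // ¬ p a}, f a = 0 := fun a => dif_neg a.2
  have hLf : ∀ a : {a // p a}, (weightedLaplacian G w *ᵥ f) a = 0 := fun a => by
    rw [mulVec, dotProduct, ← Fintype.sum_subtype_add_sum_subtype p]
    simp only [hf_in, hf_out, mul_zero, Finset.sum_const_zero, add_zero]
    exact congrFun hy a
  have hQ : f ⬝ᵥ (weightedLaplacian G w *ᵥ f) = 0 := by
    rw [dotProduct, ← Fintype.sum_subtype_add_sum_subtype p]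
    simp only [hLf, hf_out, mul_zero, zero_mul, Finset.sum_const_zero, add_zero]
  have hconst := hconn.preconnected.eq_of_forall_adj
    fun _ _ => eq_of_adj_of_dotProduct_weightedLaplacian_mulVec_eq_zero hw hpos hQ
  obtain ⟨a₀, ha₀⟩ := hp
  funext a
  rw [← hf_in, hconst a a₀, hf_out ⟨a₀, ha₀⟩]
  rfl

end Laplacian

section TreeLaplacian

variable {V : Type*} [Fintype V] [DecidableEq V] {G : SimpleGraph V} [DecidableRel G.Adj]
  {w d : V → V → ℝ}

lemma weightedLaplacian_mulVec_dist (hG : G.IsTree) (hw : ∀ a b, w a b = w b a)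
    (hpos : ∀ a b, G.Adj a b → 0 < w a b) (hd : G.IsPathDist w d) (r a : V) :
    (weightedLaplacian G w *ᵥ fun x => d x r) a = (if a = r then 0 else 2) - G.degree a := by
  obtain ⟨p, hp, -⟩ := hG.existsUnique_path a r
  have hback : ∀ c ∈ G.neighborFinset a, c ≠ p.snd → w a c * (d a r - d c r) = -1 := by
    intro c hc hcp
    have hac := (G.mem_neighborFinset a c).mp hc
    rw [hd.adj_eq_add_of_ne_snd hG.isAcyclic hp hac hcp, hw c a]
    field_simp [(hpos a c hac).ne']
    ring
  rw [weightedLaplacian_mulVec_apply, ← G.card_neighborFinset_eq_degree]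
  cases p with
  | nil =>
    rw [if_pos rfl, Finset.sum_congr rfl fun c hc => hback c hc ?_]
    · simp
    · exact (G.ne_of_adj ((G.mem_neighborFinset _ c).mp hc)).symm
  | @cons _ b _ hab q =>
    rw [SimpleGraph.Walk.snd_cons] at hback
    have hb : b ∈ G.neighborFinset a := (G.mem_neighborFinset a b).mpr hab
    have hforward : w a b * (d a r - d b r) = 1 := by
      rw [hd.eq_add_of_cons hp]
      field_simp [(hpos a b hab).ne']
      ring
    have har : a ≠ r := by
      rintro rfl
      exact ((SimpleGraph.Walk.cons_isPath_iff _ _).mp hp).2 q.end_mem_support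
    rw [if_neg har, ← Finset.add_sum_erase _ _ hb, hforward,
      Finset.sum_congr rfl fun c hc => hback c (Finset.mem_of_mem_erase hc)
        (Finset.ne_of_mem_erase hc)]
    have hdeg : 1 ≤ #(G.neighborFinset a) := Finset.card_pos.mpr ⟨b, hb⟩
    simp only [Finset.sum_const, Finset.card_erase_of_mem hb, nsmul_eq_mul, Nat.cast_sub hdeg]
    ring

end TreeLaplacian

lemma Function.bijective_sumElim_subtypeVal_of_range_eq {ι V : Type*} {v : ι → V}
    (hv : Function.Injective v) {p : V → Prop} (hrange : Set.range v = {a | p a}) :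
    Function.Bijective (Sum.elim v (Subtype.val : {a // ¬ p a} → V)) := by
  refine ⟨hv.sumElim Subtype.val_injective fun i a h => a.2 ?_, fun a => ?_⟩
  · rw [← h]
    exact hrange.subset ⟨i, rfl⟩
  · by_cases ha : p a
    · obtain ⟨i, rfl⟩ : a ∈ Set.range v := hrange ▸ ha
      exact ⟨.inl i, rfl⟩
    · exact ⟨.inr ⟨a, ha⟩, rfl⟩

section Schur

variable {ι κ V R : Type*} [Fintype ι] [Fintype κ] [Fintype V]

lemma Matrix.mulVec_comp_eq_add_of_bijective_sumElim [NonUnitalNonAssocSemiring R]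
    (L : Matrix V V R) {v : ι → V} {s : κ → V} (hvs : Function.Bijective (Sum.elim v s))
    (u : V → R) {α : Type*} (f : α → V) :
    (L *ᵥ u) ∘ f = L.submatrix f v *ᵥ (u ∘ v) + L.submatrix f s *ᵥ (u ∘ s) := by
  funext a
  simp only [Function.comp_apply, mulVec, dotProduct, Pi.add_apply, submatrix_apply]
  rw [← Equiv.sum_comp (Equiv.ofBijective _ hvs), Fintype.sum_sum_type]
  rfl

lemma Matrix.schurComplement_mulVec_comp [CommRing R] [DecidableEq κ] (L : Matrix V V R)
    {v : ι → V} {s : κ → V} (hvs : Function.Bijective (Sum.elim v s))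
    (hL : IsUnit (L.submatrix s s).det) (u : V → R) (hu : (L *ᵥ u) ∘ s = 0) :
    (L.submatrix v v - L.submatrix v s * (L.submatrix s s)⁻¹ * L.submatrix s v) *ᵥ (u ∘ v) =
      (L *ᵥ u) ∘ v := by
  have hinterior := L.mulVec_comp_eq_add_of_bijective_sumElim hvs u s
  rw [hu] at hinterior
  have hus : u ∘ s = (L.submatrix s s)⁻¹ *ᵥ -(L.submatrix s v *ᵥ (u ∘ v)) := by
    rw [← eq_neg_of_add_eq_zero_right hinterior.symm, mulVec_mulVec, nonsing_inv_mul _ hL,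
      one_mulVec]
  rw [L.mulVec_comp_eq_add_of_bijective_sumElim hvs u v, hus, sub_mulVec, ← mulVec_mulVec,
    ← mulVec_mulVec, mulVec_neg, mulVec_neg, sub_eq_add_neg]

end Schur

section GromovProduct

variable {V : Type*} [Fintype V] [DecidableEq V] {G : SimpleGraph V} [DecidableRel G.Adj]
  {w d : V → V → ℝ}

noncomputable def gromovProduct (d : V → V → ℝ) (r x y : V) : ℝ := (d x r + d y r - d x y) / 2

lemma weightedLaplacian_mulVec_gromovProduct (hG : G.IsTree) (hw : ∀ a b, w a b = w b a)
    (hpos : ∀ a b, G.Adj a b → 0 < w a b) (hd : G.IsPathDist w d) (r t a : V) :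
    (weightedLaplacian G w *ᵥ fun x => gromovProduct d r x t) a =
      (if a = t then 1 else 0) - if a = r then 1 else 0 := by
  have hlin : (weightedLaplacian G w *ᵥ fun x => gromovProduct d r x t) a =
      ((weightedLaplacian G w *ᵥ fun x => d x r) a -
        (weightedLaplacian G w *ᵥ fun x => d x t) a) / 2 := by
    simp only [weightedLaplacian_mulVec_apply, gromovProduct, ← Finset.sum_sub_distrib,
      Finset.sum_div]
    exact Finset.sum_congr rfl fun _ _ => by ring
  rw [hlin, weightedLaplacian_mulVec_dist hG hw hpos hd,
    weightedLaplacian_mulVec_dist hG hw hpos hd]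
  split_ifs <;> ring

lemma schurComplement_mulVec_gromovProduct (hG : G.IsTree) (hw : ∀ a b, w a b = w b a)
    (hpos : ∀ a b, G.Adj a b → 0 < w a b) (hd : G.IsPathDist w d) {ι κ : Type*} [Fintype ι]
    [Fintype κ] [DecidableEq ι] [DecidableEq κ] {v : ι → V} {s : κ → V}
    (hvs : Function.Bijective (Sum.elim v s))
    (hL : IsUnit ((weightedLaplacian G w).submatrix s s).det) (i j : ι) :
    ((weightedLaplacian G w).submatrix v v - (weightedLaplacian G w).submatrix v s *
        ((weightedLaplacian G w).submatrix s s)⁻¹ * (weightedLaplacian G w).submatrix s v) *ᵥ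
      (fun m => gromovProduct d (v i) (v m) (v j)) =
      fun m => (if m = j then 1 else 0) - if m = i then 1 else 0 := by
  have hLU := funext (weightedLaplacian_mulVec_gromovProduct hG hw hpos hd (v i) (v j))
  have hv : Function.Injective v := hvs.injective.comp Sum.inl_injective
  have hsv : ∀ a m, s a ≠ v m := fun a m h => Sum.inr_ne_inl (hvs.injective h)
  refine (schurComplement_mulVec_comp _ hvs hL (fun x => gromovProduct d (v i) x (v j)) ?_).trans ?_
  · rw [hLU]
    funext a
    simp [hsv]
  · rw [hLU]
    funext m
    simp [hv.eq_iff]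

end GromovProduct

namespace Matrix

variable {n R : Type*} [Fintype n] [DecidableEq n] [CommRing R]

def groundAt (S : Matrix n n R) (i₀ : n) : Matrix n n R :=
  of fun i j => if i = i₀ then (if j = i₀ then 1 else 0) else if j = i₀ then 0 else S i j

lemma groundAt_mul_eq_one {S : Matrix n n R} {i₀ : n} (x : n → n → R)
    (hx₀ : ∀ j, j ≠ i₀ → x j i₀ = 0)
    (hSx : ∀ j i, j ≠ i₀ → i ≠ i₀ → (S *ᵥ x j) i = if i = j then 1 else 0) :
    S.groundAt i₀ * of (fun m j => if j = i₀ then (if m = i₀ then 1 else 0) else x j m) = 1 := by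
  ext i j
  rw [mul_apply, one_apply]
  by_cases hi : i = i₀
  · subst hi
    by_cases hj : j = i
    · simp [groundAt, hj]
    · simp [groundAt, hj, hx₀ j hj, Ne.symm hj]
  by_cases hj : j = i₀
  · subst hj
    simp [groundAt, hi]
  rw [← hSx j i hj hi, mulVec, dotProduct]
  refine Finset.sum_congr rfl fun m _ => ?_
  by_cases hm : m = i₀
  · subst hm
    simp [groundAt, hi, hj, hx₀ j hj]
  · simp [groundAt, hi, hm, hj]

end Matrix

theorem schur_complement_inverse_diagonal_gives_leaf_distances_general
    {V : Type*} [Fintype V] [DecidableEq V]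
    (G : SimpleGraph V) [DecidableRel G.Adj] (htree : G.IsTree)
    (w : V → V → ℝ) (hw : ∀ a b, w a b = w b a)
    (hpos : ∀ a b, G.Adj a b → 0 < w a b)
    (k : ℕ) (v : Fin k → V) (hinj : Function.Injective v)
    (hrange : Set.range v = {u : V | G.degree u = 1})
    (d : V → V → ℝ)
    (hd : ∀ (a b : V) (p : G.Walk a b), p.IsPath →
      d a b = (p.darts.map fun dd => 1 / w dd.toProd.1 dd.toProd.2).sum)
    (i₀ : Fin k) :
    let Lhat : Matrix {u : V // G.degree u ≠ 1} {u : V // G.degree u ≠ 1} ℝ :=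
      (weightedLaplacian G w).submatrix (fun l => (l : V)) (fun l => (l : V));
    let Dhat : Matrix (Fin k) (Fin k) ℝ :=
      Matrix.of fun i j => weightedLaplacian G w (v i) (v j);
    let B : Matrix {u : V // G.degree u ≠ 1} (Fin k) ℝ :=
      Matrix.of fun l i => -(weightedLaplacian G w (l : V) (v i));
    let S : Matrix (Fin k) (Fin k) ℝ := Dhat - Bᵀ * Lhat⁻¹ * B;
    let Si₀ : Matrix (Fin k) (Fin k) ℝ :=
      Matrix.of fun i j =>
        if i = i₀ then (if j = i₀ then 1 else 0)
        else if j = i₀ then 0 else S i j;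
    IsUnit Si₀ ∧ ∀ j : Fin k, j ≠ i₀ → Si₀⁻¹ j j = d (v j) (v i₀) := by
  intro Lhat Dhat B S Si₀
  set L := weightedLaplacian G w
  set s : {u : V // G.degree u ≠ 1} → V := Subtype.val
  have hd : G.IsPathDist w d := hd
  have hbij := Function.bijective_sumElim_subtypeVal_of_range_eq hinj hrange
  have hLhat : IsUnit Lhat.det := (isUnit_iff_isUnit_det _).mp <|
    isUnit_weightedLaplacian_submatrix htree.connected hw hpos _
      ⟨v i₀, not_not.mpr (hrange.subset ⟨i₀, rfl⟩)⟩
  have hS : S = L.submatrix v v - L.submatrix v s * Lhat⁻¹ * L.submatrix s v := by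
    have hB : B = -L.submatrix s v := rfl
    rw [show S = Dhat - Bᵀ * Lhat⁻¹ * B from rfl, hB, transpose_neg, transpose_submatrix,
      (weightedLaplacian_isSymm hw).eq]
    simp only [Matrix.neg_mul, Matrix.mul_neg, neg_neg]
    rfl
  set U : Fin k → Fin k → ℝ := fun j m => gromovProduct d (v i₀) (v m) (v j)
  have hX : Si₀ * of (fun m j => if j = i₀ then (if m = i₀ then 1 else 0) else U j m) = 1 := by
    refine groundAt_mul_eq_one U (fun j _ => ?_) fun j i _ hi => ?_
    · simp [U, gromovProduct, hd.self_eq_zero, hd.symm htree.connected hw (v j)]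
    · rw [hS, schurComplement_mulVec_gromovProduct htree hw hpos hd hbij hLhat]
      simp [hi]
  refine ⟨(isUnit_iff_isUnit_det _).mpr (isUnit_det_of_right_inverse hX), fun j hj => ?_⟩
  rw [inv_eq_right_inv hX]
  simp [hj, U, gromovProduct, hd.self_eq_zero]

/-- let `G` be a finite weighted tree with leaves `v 0, …, v (k-1)` and at
least one interior vertex, and let `S = D̂ - Bᵀ L̂⁻¹ B` be the Schur complement of the
weighted Laplacian onto the leaves (block form `[[D̂, -Bᵀ], [-B, L̂]]`).  For a fixed
leaf index `i₀`, the matrix `S_{i₀}` obtained from `S` by replacing the `(i₀,i₀)` entry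
by `1` and the other entries of the `i₀`-th row and column by `0` is invertible, and for
`j ≠ i₀` the `j`-th diagonal entry of `S_{i₀}⁻¹` is the distance `d (v j) (v i₀)`
between the corresponding leaves.  The distance `d` is characterized by summing `1/w_e`
along (unique) paths. -/
theorem schur_complement_inverse_diagonal_gives_leaf_distances
    {V : Type*} [Fintype V] [DecidableEq V]
    (G : SimpleGraph V) [DecidableRel G.Adj] (htree : G.IsTree)
    (w : V → V → ℝ) (hw : ∀ a b, w a b = w b a)
    (hpos : ∀ a b, G.Adj a b → 0 < w a b)
    (k : ℕ) (v : Fin k → V) (hinj : Function.Injective v)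
    (hrange : Set.range v = {u : V | G.degree u = 1})
    (hint : ∃ u : V, G.degree u ≠ 1)
    (d : V → V → ℝ)
    (hd : ∀ (a b : V) (p : G.Walk a b), p.IsPath →
      d a b = (p.darts.map fun dd => 1 / w dd.toProd.1 dd.toProd.2).sum)
    (i₀ : Fin k) :
    let Lhat : Matrix {u : V // G.degree u ≠ 1} {u : V // G.degree u ≠ 1} ℝ :=
      (weightedLaplacian G w).submatrix (fun l => (l : V)) (fun l => (l : V));
    let Dhat : Matrix (Fin k) (Fin k) ℝ :=
      Matrix.of fun i j => weightedLaplacian G w (v i) (v j);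
    let B : Matrix {u : V // G.degree u ≠ 1} (Fin k) ℝ :=
      Matrix.of fun l i => -(weightedLaplacian G w (l : V) (v i));
    let S : Matrix (Fin k) (Fin k) ℝ := Dhat - Bᵀ * Lhat⁻¹ * B;
    let Si₀ : Matrix (Fin k) (Fin k) ℝ :=
      Matrix.of fun i j =>
        if i = i₀ then (if j = i₀ then 1 else 0)
        else if j = i₀ then 0 else S i j;
    IsUnit Si₀ ∧ ∀ j : Fin k, j ≠ i₀ → Si₀⁻¹ j j = d (v j) (v i₀) :=
  schur_complement_inverse_diagonal_gives_leaf_distances_general G htree w hw hpos k v hinj hrange d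
    hd i₀
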